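/- (Contraction estimate for the fixed-point operator.) Let f, g ∈ L²(Ω) and, for G ∈ H¹(Ω), let φ = S(G) solve -Δφ + K·∇G = f in Ω with φ = 0 on Γ₁ and ∂φ/∂n = 0 on Γ₂, and let G₁ = Q(φ) solve -λΔG₁ + ∇Θ·(∇φ)^⊥ = g in Ω with G₁ = 0 on Γ. Then for G, G' ∈ H¹(Ω), ‖∇(T G - T G')‖_{L²} ≤ (C²‖K‖_∞‖∇Θ‖_∞/λ) ‖∇(G - G')‖_{L²}, where T = Q∘S. In particular, if C²‖K‖_∞‖∇Θ‖_∞ < λ then T is a contraction. -/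

import Mathlib

noncomputable section
open MeasureTheory
open scoped RealInnerProductSpace ENNReal NNReal

abbrev E2 := EuclideanSpace ℝ (Fin 2)

def perp (p : E2) : E2 := WithLp.toLp 2 ![p 1, -p 0]

def dot (p q : E2) : ℝ := p 0 * q 0 + p 1 * q 1

def L2norm {α : Type*} [NormedAddCommGroup α] (Ω : Set (ℝ × ℝ)) (f : ℝ × ℝ → α) : ℝ :=
  (eLpNorm f 2 (volume.restrict Ω)).toReal

def LinfNorm {α : Type*} [NormedAddCommGroup α] (Ω : Set (ℝ × ℝ)) (f : ℝ × ℝ → α) : ℝ :=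
  (eLpNorm f ⊤ (volume.restrict Ω)).toReal

def HasWeakGradOn (Ω : Set (ℝ × ℝ)) (u : ℝ × ℝ → ℝ) (gu : ℝ × ℝ → E2) : Prop :=
  ∀ φ : ℝ × ℝ → ℝ, ContDiff ℝ (⊤ : ℕ∞) φ → HasCompactSupport φ → tsupport φ ⊆ Ω →
    ((∫ x in Ω, u x * fderiv ℝ φ x (1, 0)) = -∫ x in Ω, gu x 0 * φ x) ∧
    ((∫ x in Ω, u x * fderiv ℝ φ x (0, 1)) = -∫ x in Ω, gu x 1 * φ x)

def IsH1 (Ω : Set (ℝ × ℝ)) (u : ℝ × ℝ → ℝ) (gu : ℝ × ℝ → E2) : Prop :=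
  MemLp u 2 (volume.restrict Ω) ∧ MemLp gu 2 (volume.restrict Ω) ∧ HasWeakGradOn Ω u gu

def IsH10 (Ω : Set (ℝ × ℝ)) (u : ℝ × ℝ → ℝ) (gu : ℝ × ℝ → E2) : Prop :=
  IsH1 Ω u gu ∧ (∀ x ∉ Ω, u x = 0 ∧ gu x = 0) ∧
  ∀ φ : ℝ × ℝ → ℝ, ContDiff ℝ (⊤ : ℕ∞) φ → HasCompactSupport φ →
    ((∫ x, u x * fderiv ℝ φ x (1, 0)) = -∫ x, gu x 0 * φ x) ∧
    ((∫ x, u x * fderiv ℝ φ x (0, 1)) = -∫ x, gu x 1 * φ x)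

def IsWPsi (Ω Γ₁ : Set (ℝ × ℝ)) (u : ℝ × ℝ → ℝ) (gu : ℝ × ℝ → E2) : Prop :=
  IsH1 Ω u gu ∧ ∀ x ∈ Γ₁, u x = 0

def aForm (Ω : Set (ℝ × ℝ)) (u : ℝ × ℝ → ℝ) (gv gw : ℝ × ℝ → E2) : ℝ :=
  ∫ x in Ω, u x * dot (gv x) (perp (gw x))


lemma dot_eq_inner (p q : E2) : dot p q = ⟪p, q⟫ := by
  simp [dot, PiLp.inner_apply, Fin.sum_univ_two, RCLike.inner_apply, conj_trivial]
  ring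

lemma abs_dot_le (p q : E2) : |dot p q| ≤ ‖p‖ * ‖q‖ := by
  rw [dot_eq_inner]; exact abs_real_inner_le_norm p q

lemma norm_perp (p : E2) : ‖perp p‖ = ‖p‖ := by
  simp [EuclideanSpace.norm_eq, perp, Fin.sum_univ_two, sq_abs, abs_neg]
  ring_nf

def perpCLM : E2 →L[ℝ] E2 :=
  LinearMap.toContinuousLinearMap
  { toFun := perp
    map_add' := by
      intro p q; ext i; fin_cases i <;>
        simp [perp, PiLp.add_apply]; ring
    map_smul' := by
      intro c p; ext i; fin_cases i <;>
        simp [perp, PiLp.smul_apply, smul_eq_mul, mul_comm] }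

lemma perpCLM_apply (p : E2) : perpCLM p = perp p := rfl

section MeasHelpers
variable {α : Type*} {m : MeasurableSpace α} {μ : Measure α}

lemma real_inner_eq_mul (x y : ℝ) : ⟪x, y⟫ = x * y := by
  simp [RCLike.inner_apply, conj_trivial]
  ring
lemma integrable_inner' {E : Type*} [NormedAddCommGroup E] [InnerProductSpace ℝ E]
    {f g : α → E} (hf : MemLp f 2 μ) (hg : MemLp g 2 μ) :
    Integrable (fun x => (⟪f x, g x⟫ : ℝ)) μ := by
  have h := L2.integrable_inner (𝕜 := ℝ) (hf.toLp f) (hg.toLp g)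
  refine h.congr ?_
  filter_upwards [hf.coeFn_toLp, hg.coeFn_toLp] with x h1 h2
  rw [h1, h2]

lemma integrable_mul' {f g : α → ℝ} (hf : MemLp f 2 μ) (hg : MemLp g 2 μ) :
    Integrable (fun x => f x * g x) μ := by
  have := integrable_inner' hf hg
  simpa [real_inner_eq_mul, mul_comm] using this

lemma integrable_dot' {f g : α → E2} (hf : MemLp f 2 μ) (hg : MemLp g 2 μ) :
    Integrable (fun x => dot (f x) (g x)) μ := by
  simp only [dot_eq_inner]; exact integrable_inner' hf hg

lemma abs_integral_mul_le {f g : α → ℝ} (hf : MemLp f 2 μ) (hg : MemLp g 2 μ) :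
    |∫ x, f x * g x ∂μ| ≤ (eLpNorm f 2 μ).toReal * (eLpNorm g 2 μ).toReal := by
  have h := abs_real_inner_le_norm (hf.toLp f) (hg.toLp g)
  rw [L2.inner_def] at h
  rw [Lp.norm_toLp f hf, Lp.norm_toLp g hg] at h
  have he : (∫ x, f x * g x ∂μ) = ∫ a, ⟪(hf.toLp f) a, (hg.toLp g) a⟫ ∂μ := by
    refine integral_congr_ae ?_
    filter_upwards [hf.coeFn_toLp, hg.coeFn_toLp] with x h1 h2
    rw [h1, h2, real_inner_eq_mul]
  rw [he]; exact h

lemma integral_mul_self_eq {f : α → ℝ} (hf : MemLp f 2 μ) :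
    ∫ x, f x * f x ∂μ = (eLpNorm f 2 μ).toReal ^ 2 := by
  have h := real_inner_self_eq_norm_sq (hf.toLp f)
  rw [L2.inner_def] at h
  rw [Lp.norm_toLp f hf] at h
  have he : (∫ x, f x * f x ∂μ) = ∫ a, ⟪(hf.toLp f) a, (hf.toLp f) a⟫ ∂μ := by
    refine integral_congr_ae ?_
    filter_upwards [hf.coeFn_toLp] with x h1
    rw [h1, real_inner_eq_mul]
  rw [he, h]

lemma integral_dot_self_eq {f : α → E2} (hf : MemLp f 2 μ) :
    ∫ x, dot (f x) (f x) ∂μ = (eLpNorm f 2 μ).toReal ^ 2 := by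
  have h := real_inner_self_eq_norm_sq (hf.toLp f)
  rw [L2.inner_def] at h
  rw [Lp.norm_toLp f hf] at h
  have he : (∫ x, dot (f x) (f x) ∂μ) = ∫ a, ⟪(hf.toLp f) a, (hf.toLp f) a⟫ ∂μ := by
    refine integral_congr_ae ?_
    filter_upwards [hf.coeFn_toLp] with x h1
    rw [h1, dot_eq_inner]
  rw [he, h]

lemma ae_norm_le_Linf {E : Type*} [NormedAddCommGroup E] {f : α → E} (hf : MemLp f ⊤ μ) :
    ∀ᵐ x ∂μ, ‖f x‖ ≤ (eLpNorm f ⊤ μ).toReal := by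
  filter_upwards [ae_le_eLpNormEssSup (f := f) (μ := μ)] with x hx
  have hfin : eLpNormEssSup f μ ≠ ⊤ := by
    rw [← eLpNorm_exponent_top]; exact hf.2.ne
  have : (‖f x‖₊ : ℝ≥0∞).toReal ≤ (eLpNormEssSup f μ).toReal :=
    ENNReal.toReal_mono hfin hx
  simpa [eLpNorm_exponent_top] using this

section MoreHelpers
variable {α : Type*} {m : MeasurableSpace α} {μ : Measure α}

lemma memℒp_apply_coord {f : α → E2} {p : ℝ≥0∞} (hf : MemLp f p μ) (i : Fin 2) :
    MemLp (fun x => f x i) p μ := by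
  have := (EuclideanSpace.proj i : E2 →L[ℝ] ℝ).comp_memLp' hf
  simpa [Function.comp_def] using this

lemma memℒp_perp {f : α → E2} {p : ℝ≥0∞} (hf : MemLp f p μ) :
    MemLp (fun x => perp (f x)) p μ := by
  have := perpCLM.comp_memLp' hf
  simpa [Function.comp_def, perpCLM_apply] using this

lemma aesm_dot {f g : α → E2} (hf : AEStronglyMeasurable f μ)
    (hg : AEStronglyMeasurable g μ) :
    AEStronglyMeasurable (fun x => dot (f x) (g x)) μ := by
  simp only [dot_eq_inner]; exact hf.inner hg

lemma memℒp_dot_top {K d : α → E2} (hK : MemLp K ⊤ μ) (hd : MemLp d 2 μ) :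
    MemLp (fun x => dot (K x) (d x)) 2 μ := by
  refine MemLp.of_le ((hd.norm).const_mul (eLpNorm K ⊤ μ).toReal)
    (aesm_dot hK.1 hd.1) ?_
  filter_upwards [ae_norm_le_Linf hK] with x hx
  have h1 : |dot (K x) (d x)| ≤ ‖K x‖ * ‖d x‖ := abs_dot_le _ _
  have h2 : ‖K x‖ * ‖d x‖ ≤ (eLpNorm K ⊤ μ).toReal * ‖d x‖ :=
    mul_le_mul_of_nonneg_right hx (norm_norm (d x) ▸ norm_nonneg _)
  calc ‖dot (K x) (d x)‖ = |dot (K x) (d x)| := rfl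
    _ ≤ (eLpNorm K ⊤ μ).toReal * ‖d x‖ := h1.trans h2
    _ ≤ ‖(eLpNorm K ⊤ μ).toReal * ‖d x‖‖ := le_abs_self _

lemma eLpNorm_dot_top_le {K d : α → E2} (hK : MemLp K ⊤ μ) (hd : MemLp d 2 μ) :
    (eLpNorm (fun x => dot (K x) (d x)) 2 μ).toReal
      ≤ (eLpNorm K ⊤ μ).toReal * (eLpNorm d 2 μ).toReal := by
  set M := (eLpNorm K ⊤ μ).toReal with hM
  have hM0 : 0 ≤ M := ENNReal.toReal_nonneg
  have h1 : eLpNorm (fun x => dot (K x) (d x)) 2 μ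
      ≤ eLpNorm (fun x => M * ‖d x‖) 2 μ := by
    refine eLpNorm_mono_ae ?_
    filter_upwards [ae_norm_le_Linf hK] with x hx
    calc ‖dot (K x) (d x)‖ = |dot (K x) (d x)| := rfl
      _ ≤ ‖K x‖ * ‖d x‖ := abs_dot_le _ _
      _ ≤ M * ‖d x‖ := mul_le_mul_of_nonneg_right hx (norm_nonneg _)
      _ ≤ ‖M * ‖d x‖‖ := le_abs_self _
  have h2 : eLpNorm (fun x => M * ‖d x‖) 2 μ = ‖M‖₊ * eLpNorm d 2 μ := by
    have : (fun x => M * ‖d x‖) = M • (fun x => ‖d x‖) := by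
      funext x; simp [smul_eq_mul]
    rw [this, eLpNorm_const_smul, eLpNorm_norm, enorm_eq_nnnorm]
  have h3 : eLpNorm (fun x => dot (K x) (d x)) 2 μ ≤ ‖M‖₊ * eLpNorm d 2 μ := h2 ▸ h1
  have h4 : (eLpNorm (fun x => dot (K x) (d x)) 2 μ).toReal
      ≤ ((‖M‖₊ : ℝ≥0∞) * eLpNorm d 2 μ).toReal := by
    refine ENNReal.toReal_mono ?_ h3
    exact ENNReal.mul_ne_top ENNReal.coe_ne_top hd.2.ne
  calc (eLpNorm (fun x => dot (K x) (d x)) 2 μ).toReal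
      ≤ ((‖M‖₊ : ℝ≥0∞) * eLpNorm d 2 μ).toReal := h4
    _ = ‖M‖ * (eLpNorm d 2 μ).toReal := by
        rw [ENNReal.toReal_mul]; simp
    _ = M * (eLpNorm d 2 μ).toReal := by rw [Real.norm_of_nonneg hM0]

lemma abs_integral_dot_mul_le {K d : α → E2} {u : α → ℝ}
    (hK : MemLp K ⊤ μ) (hd : MemLp d 2 μ) (hu : MemLp u 2 μ) :
    |∫ x, dot (K x) (d x) * u x ∂μ|
      ≤ (eLpNorm K ⊤ μ).toReal * ((eLpNorm d 2 μ).toReal * (eLpNorm u 2 μ).toReal) := by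
  have h1 := abs_integral_mul_le (memℒp_dot_top hK hd) hu
  refine h1.trans ?_
  rw [← mul_assoc]
  exact mul_le_mul_of_nonneg_right (eLpNorm_dot_top_le hK hd) ENNReal.toReal_nonneg

lemma integrable_dot_mul {K d : α → E2} {u : α → ℝ}
    (hK : MemLp K ⊤ μ) (hd : MemLp d 2 μ) (hu : MemLp u 2 μ) :
    Integrable (fun x => dot (K x) (d x) * u x) μ :=
  integrable_mul' (memℒp_dot_top hK hd) hu

end MoreHelpers

section Extension
variable {α : Type*} {m : MeasurableSpace α} {μ : Measure α}

lemma memℒp_of_restrict {E : Type*} [NormedAddCommGroup E] {f : α → E} {s : Set α}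
    {p : ℝ≥0∞} (h0 : ∀ x ∉ s, f x = 0) (hf : MemLp f p (μ.restrict s)) : MemLp f p μ := by
  obtain ⟨g, hgsm, hfg⟩ := hf.1
  have h1 : μ.restrict s {x | ¬ f x = g x} = 0 := by
    rw [Filter.EventuallyEq, MeasureTheory.ae_iff] at hfg; exact hfg
  obtain ⟨N, hsub, hNm, hN0⟩ := exists_measurable_superset_of_null h1
  rw [Measure.restrict_apply hNm] at hN0
  set M := toMeasurable μ (N ∩ s) with hMdef
  have hM0 : μ M = 0 := by rw [hMdef, measure_toMeasurable]; exact hN0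
  have hMm : MeasurableSet M := measurableSet_toMeasurable _ _
  set h' : α → E := Set.indicator Nᶜ g with hh'
  have h2 : ∀ x ∉ M, f x = h' x := by
    intro x hxM
    by_cases hxN : x ∈ N
    · have hxs : x ∉ s := fun hxs => hxM (subset_toMeasurable _ _ ⟨hxN, hxs⟩)
      rw [hh', Set.indicator_of_notMem (by simpa using hxN), h0 x hxs]
    · have hfx : f x = g x := by
        by_contra hne; exact hxN (hsub hne)
      rw [hh', Set.indicator_of_mem (by simpa using hxN), hfx]
  have haeM : ∀ᵐ x ∂μ, x ∉ M := measure_eq_zero_iff_ae_notMem.mp hM0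
  have hae : f =ᵐ[μ] h' := by filter_upwards [haeM] with x hx using h2 x hx
  have hsm : StronglyMeasurable h' := hgsm.indicator hNm.compl
  refine ⟨⟨h', hsm, hae⟩, ?_⟩
  set T := Function.support h' with hT
  have hTm : MeasurableSet T := hsm.measurableSet_support
  have hTsub : T ⊆ M ∪ s := by
    intro x hx
    by_contra hx2
    have hxM : x ∉ M := fun h => hx2 (Or.inl h)
    have hxs : x ∉ s := fun h => hx2 (Or.inr h)
    exact hx ((h2 x hxM).symm.trans (h0 x hxs))
  have key : eLpNorm f p μ ≤ eLpNorm f p (μ.restrict s) := by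
    calc eLpNorm f p μ = eLpNorm h' p μ := eLpNorm_congr_ae hae
      _ = eLpNorm h' p (μ.restrict T) := by
          rw [← eLpNorm_indicator_eq_eLpNorm_restrict hTm,
            Set.indicator_eq_self.mpr (by rw [hT])]
      _ ≤ eLpNorm h' p (μ.restrict (M ∪ s)) :=
          eLpNorm_mono_measure _ (Measure.restrict_mono hTsub le_rfl)
      _ ≤ eLpNorm h' p (μ.restrict M + μ.restrict s) :=
          eLpNorm_mono_measure _ (Measure.restrict_union_le _ _)
      _ = eLpNorm h' p (μ.restrict s) := by
          rw [Measure.restrict_eq_zero.mpr hM0, zero_add]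
      _ = eLpNorm f p (μ.restrict s) :=
          eLpNorm_congr_ae (ae_restrict_of_ae hae.symm)
  exact lt_of_le_of_lt key hf.2

end Extension

section TestFn

lemma test_memℒp {ψ : ℝ × ℝ → ℝ} (hψ : ContDiff ℝ (⊤ : ℕ∞) ψ) (hs : HasCompactSupport ψ)
    (μ : Measure (ℝ × ℝ)) [IsFiniteMeasureOnCompacts μ] : MemLp ψ 2 μ :=
  hψ.continuous.memLp_of_hasCompactSupport hs

lemma test_deriv_memℒp {ψ : ℝ × ℝ → ℝ} (hψ : ContDiff ℝ (⊤ : ℕ∞) ψ) (hs : HasCompactSupport ψ)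
    (v : ℝ × ℝ) (μ : Measure (ℝ × ℝ)) [IsFiniteMeasureOnCompacts μ] :
    MemLp (fun x => fderiv ℝ ψ x v) 2 μ := by
  have hc : Continuous fun x => fderiv ℝ ψ x v :=
    (hψ.continuous_fderiv (by simp)).clm_apply continuous_const
  have hcs : HasCompactSupport fun x => fderiv ℝ ψ x v := hs.fderiv_apply ℝ v
  exact hc.memLp_of_hasCompactSupport hcs

end TestFn

section SubLemmas

lemma isH1_sub {Ω : Set (ℝ × ℝ)} {u u' : ℝ × ℝ → ℝ} {gu gu' : ℝ × ℝ → E2}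
    (h : IsH1 Ω u gu) (h' : IsH1 Ω u' gu') :
    IsH1 Ω (fun x => u x - u' x) (fun x => gu x - gu' x) := by
  obtain ⟨hu2, hgu2, hwg⟩ := h
  obtain ⟨hu2', hgu2', hwg'⟩ := h'
  refine ⟨hu2.sub hu2', hgu2.sub hgu2', ?_⟩
  intro ψ hψ hψc hψΩ
  obtain ⟨e1, e2⟩ := hwg ψ hψ hψc hψΩ
  obtain ⟨e1', e2'⟩ := hwg' ψ hψ hψc hψΩ
  have hψm : MemLp ψ 2 (volume.restrict Ω) := (test_memℒp hψ hψc volume).restrict Ω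
  have hD1 : MemLp (fun x => fderiv ℝ ψ x (1, 0)) 2 (volume.restrict Ω) :=
    (test_deriv_memℒp hψ hψc (1, 0) volume).restrict Ω
  have hD2 : MemLp (fun x => fderiv ℝ ψ x (0, 1)) 2 (volume.restrict Ω) :=
    (test_deriv_memℒp hψ hψc (0, 1) volume).restrict Ω
  constructor
  · show (∫ x in Ω, (u x - u' x) * fderiv ℝ ψ x (1, 0))
      = -∫ x in Ω, (gu x - gu' x) 0 * ψ x
    have hs1 : (∫ x in Ω, (u x - u' x) * fderiv ℝ ψ x (1, 0)) =
        (∫ x in Ω, u x * fderiv ℝ ψ x (1, 0)) - ∫ x in Ω, u' x * fderiv ℝ ψ x (1, 0) := by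
      rw [← integral_sub (integrable_mul' hu2 hD1) (integrable_mul' hu2' hD1)]
      exact integral_congr_ae (Filter.Eventually.of_forall fun x => by ring)
    have hs2 : (∫ x in Ω, (gu x - gu' x) 0 * ψ x) =
        (∫ x in Ω, gu x 0 * ψ x) - ∫ x in Ω, gu' x 0 * ψ x := by
      rw [← integral_sub (integrable_mul' (memℒp_apply_coord hgu2 0) hψm)
        (integrable_mul' (memℒp_apply_coord hgu2' 0) hψm)]
      refine integral_congr_ae (Filter.Eventually.of_forall fun x => ?_)
      simp only [PiLp.sub_apply]; ring
    rw [hs1, hs2, e1, e1']; ring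
  · show (∫ x in Ω, (u x - u' x) * fderiv ℝ ψ x (0, 1))
      = -∫ x in Ω, (gu x - gu' x) 1 * ψ x
    have hs1 : (∫ x in Ω, (u x - u' x) * fderiv ℝ ψ x (0, 1)) =
        (∫ x in Ω, u x * fderiv ℝ ψ x (0, 1)) - ∫ x in Ω, u' x * fderiv ℝ ψ x (0, 1) := by
      rw [← integral_sub (integrable_mul' hu2 hD2) (integrable_mul' hu2' hD2)]
      exact integral_congr_ae (Filter.Eventually.of_forall fun x => by ring)
    have hs2 : (∫ x in Ω, (gu x - gu' x) 1 * ψ x) =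
        (∫ x in Ω, gu x 1 * ψ x) - ∫ x in Ω, gu' x 1 * ψ x := by
      rw [← integral_sub (integrable_mul' (memℒp_apply_coord hgu2 1) hψm)
        (integrable_mul' (memℒp_apply_coord hgu2' 1) hψm)]
      refine integral_congr_ae (Filter.Eventually.of_forall fun x => ?_)
      simp only [PiLp.sub_apply]; ring
    rw [hs1, hs2, e2, e2']; ring

lemma isWPsi_sub {Ω Γ₁ : Set (ℝ × ℝ)} {u u' : ℝ × ℝ → ℝ} {gu gu' : ℝ × ℝ → E2}
    (h : IsWPsi Ω Γ₁ u gu) (h' : IsWPsi Ω Γ₁ u' gu') :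
    IsWPsi Ω Γ₁ (fun x => u x - u' x) (fun x => gu x - gu' x) :=
  ⟨isH1_sub h.1 h'.1, fun x hx => by show u x - u' x = 0; rw [h.2 x hx, h'.2 x hx, sub_zero]⟩

lemma isH10_sub {Ω : Set (ℝ × ℝ)} {u u' : ℝ × ℝ → ℝ} {gu gu' : ℝ × ℝ → E2}
    (h : IsH10 Ω u gu) (h' : IsH10 Ω u' gu') :
    IsH10 Ω (fun x => u x - u' x) (fun x => gu x - gu' x) := by
  refine ⟨isH1_sub h.1 h'.1, fun x hx => ⟨by show u x - u' x = 0; rw [(h.2.1 x hx).1, (h'.2.1 x hx).1, sub_zero],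
    by show gu x - gu' x = 0; rw [(h.2.1 x hx).2, (h'.2.1 x hx).2, sub_zero]⟩, ?_⟩
  intro ψ hψ hψc
  obtain ⟨e1, e2⟩ := h.2.2 ψ hψ hψc
  obtain ⟨e1', e2'⟩ := h'.2.2 ψ hψ hψc
  have hu : MemLp u 2 volume := memℒp_of_restrict (fun x hx => (h.2.1 x hx).1) h.1.1
  have hu' : MemLp u' 2 volume := memℒp_of_restrict (fun x hx => (h'.2.1 x hx).1) h'.1.1
  have hgu : MemLp gu 2 volume := memℒp_of_restrict (fun x hx => (h.2.1 x hx).2) h.1.2.1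
  have hgu' : MemLp gu' 2 volume := memℒp_of_restrict (fun x hx => (h'.2.1 x hx).2) h'.1.2.1
  have hψm : MemLp ψ 2 volume := test_memℒp hψ hψc volume
  have hD1 : MemLp (fun x => fderiv ℝ ψ x (1, 0)) 2 volume :=
    test_deriv_memℒp hψ hψc (1, 0) volume
  have hD2 : MemLp (fun x => fderiv ℝ ψ x (0, 1)) 2 volume :=
    test_deriv_memℒp hψ hψc (0, 1) volume
  constructor
  · show (∫ x, (u x - u' x) * fderiv ℝ ψ x (1, 0))
      = -∫ x, (gu x - gu' x) 0 * ψ x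
    have hs1 : (∫ x, (u x - u' x) * fderiv ℝ ψ x (1, 0)) =
        (∫ x, u x * fderiv ℝ ψ x (1, 0)) - ∫ x, u' x * fderiv ℝ ψ x (1, 0) := by
      rw [← integral_sub (integrable_mul' hu hD1) (integrable_mul' hu' hD1)]
      exact integral_congr_ae (Filter.Eventually.of_forall fun x => by ring)
    have hs2 : (∫ x, (gu x - gu' x) 0 * ψ x) =
        (∫ x, gu x 0 * ψ x) - ∫ x, gu' x 0 * ψ x := by
      rw [← integral_sub (integrable_mul' (memℒp_apply_coord hgu 0) hψm)
        (integrable_mul' (memℒp_apply_coord hgu' 0) hψm)]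
      refine integral_congr_ae (Filter.Eventually.of_forall fun x => ?_)
      simp only [PiLp.sub_apply]; ring
    rw [hs1, hs2, e1, e1']; ring
  · show (∫ x, (u x - u' x) * fderiv ℝ ψ x (0, 1))
      = -∫ x, (gu x - gu' x) 1 * ψ x
    have hs1 : (∫ x, (u x - u' x) * fderiv ℝ ψ x (0, 1)) =
        (∫ x, u x * fderiv ℝ ψ x (0, 1)) - ∫ x, u' x * fderiv ℝ ψ x (0, 1) := by
      rw [← integral_sub (integrable_mul' hu hD2) (integrable_mul' hu' hD2)]
      exact integral_congr_ae (Filter.Eventually.of_forall fun x => by ring)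
    have hs2 : (∫ x, (gu x - gu' x) 1 * ψ x) =
        (∫ x, gu x 1 * ψ x) - ∫ x, gu' x 1 * ψ x := by
      rw [← integral_sub (integrable_mul' (memℒp_apply_coord hgu 1) hψm)
        (integrable_mul' (memℒp_apply_coord hgu' 1) hψm)]
      refine integral_congr_ae (Filter.Eventually.of_forall fun x => ?_)
      simp only [PiLp.sub_apply]; ring
    rw [hs1, hs2, e2, e2']; ring

end SubLemmas

/-- contraction estimate for the fixed point operator `T = Q ∘ S`. With
`φ = S(G)`, `φ' = S(G')` the weak solutions of `-Δφ + K·∇G = f` in `W_Ψ` and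
`G₁ = Q(φ)`, `G₁' = Q(φ')` the weak solutions of `-λΔG₁ + ∇Θ·(∇φ)^⊥ = g` in `H¹₀(Ω)`,
one has `‖∇(G₁ - G₁')‖₂ ≤ (C²‖K‖_∞‖∇Θ‖_∞/λ)‖∇(G - G')‖₂`; in particular `T` is a
contraction when `C²‖K‖_∞‖∇Θ‖_∞ < λ`. -/
theorem fixed_point_contraction_estimate
    (Ω Γ₁ : Set (ℝ × ℝ)) (C lam : ℝ) (hC : 0 < C) (hlam : 0 < lam)
    (K : ℝ × ℝ → E2) (hK : MemLp K ⊤ (volume.restrict Ω))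
    (Θ : ℝ × ℝ → ℝ) (gΘ : ℝ × ℝ → E2)
    (hΘ : IsH1 Ω Θ gΘ) (hgΘb : MemLp gΘ ⊤ (volume.restrict Ω))
    (f g : ℝ × ℝ → ℝ)
    (hf : MemLp f 2 (volume.restrict Ω)) (hg : MemLp g 2 (volume.restrict Ω))
    -- Poincaré inequalities with constant C
    (hPoincareΨ : ∀ u : ℝ × ℝ → ℝ, ∀ gu : ℝ × ℝ → E2, IsWPsi Ω Γ₁ u gu →
      L2norm Ω u ≤ C * L2norm Ω gu)
    (hPoincareH : ∀ u : ℝ × ℝ → ℝ, ∀ gu : ℝ × ℝ → E2, IsH10 Ω u gu →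
      L2norm Ω u ≤ C * L2norm Ω gu)
    (G G' φ φ' G₁ G₁' : ℝ × ℝ → ℝ) (gG gG' gφ gφ' gG₁ gG₁' : ℝ × ℝ → E2)
    (hG : IsH1 Ω G gG) (hG' : IsH1 Ω G' gG')
    -- φ = S(G) : weak solution of -Δφ + K·∇G = f in W_Ψ
    (hφ : IsWPsi Ω Γ₁ φ gφ)
    (hSG : ∀ u : ℝ × ℝ → ℝ, ∀ gu : ℝ × ℝ → E2, IsWPsi Ω Γ₁ u gu →
      (∫ x in Ω, dot (gφ x) (gu x)) + (∫ x in Ω, dot (K x) (gG x) * u x)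
        = ∫ x in Ω, f x * u x)
    -- φ' = S(G')
    (hφ' : IsWPsi Ω Γ₁ φ' gφ')
    (hSG' : ∀ u : ℝ × ℝ → ℝ, ∀ gu : ℝ × ℝ → E2, IsWPsi Ω Γ₁ u gu →
      (∫ x in Ω, dot (gφ' x) (gu x)) + (∫ x in Ω, dot (K x) (gG' x) * u x)
        = ∫ x in Ω, f x * u x)
    -- G₁ = Q(φ) : weak solution of -λΔG₁ + ∇Θ·(∇φ)^⊥ = g in H¹₀(Ω)
    (hG₁ : IsH10 Ω G₁ gG₁)
    (hQφ : ∀ v : ℝ × ℝ → ℝ, ∀ gv : ℝ × ℝ → E2, IsH10 Ω v gv →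
      lam * (∫ x in Ω, dot (gG₁ x) (gv x)) + (∫ x in Ω, dot (gΘ x) (perp (gφ x)) * v x)
        = ∫ x in Ω, g x * v x)
    -- G₁' = Q(φ')
    (hG₁' : IsH10 Ω G₁' gG₁')
    (hQφ' : ∀ v : ℝ × ℝ → ℝ, ∀ gv : ℝ × ℝ → E2, IsH10 Ω v gv →
      lam * (∫ x in Ω, dot (gG₁' x) (gv x)) + (∫ x in Ω, dot (gΘ x) (perp (gφ' x)) * v x)
        = ∫ x in Ω, g x * v x) :
    L2norm Ω (fun x => gG₁ x - gG₁' x)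
      ≤ (C ^ 2 * LinfNorm Ω K * LinfNorm Ω gΘ / lam) * L2norm Ω (fun x => gG x - gG' x) := by
  simp only [L2norm, LinfNorm] at hPoincareΨ hPoincareH ⊢
  -- abbreviations
  set A := (eLpNorm (fun x => gφ x - gφ' x) 2 (volume.restrict Ω)).toReal with hAdef
  set B := (eLpNorm (fun x => gG₁ x - gG₁' x) 2 (volume.restrict Ω)).toReal with hBdef
  set DG := (eLpNorm (fun x => gG x - gG' x) 2 (volume.restrict Ω)).toReal with hDGdef
  set MK := (eLpNorm K ⊤ (volume.restrict Ω)).toReal with hMKdef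
  set MT := (eLpNorm gΘ ⊤ (volume.restrict Ω)).toReal with hMTdef
  have hA0 : 0 ≤ A := ENNReal.toReal_nonneg
  have hB0 : 0 ≤ B := ENNReal.toReal_nonneg
  have hDG0 : 0 ≤ DG := ENNReal.toReal_nonneg
  have hMK0 : 0 ≤ MK := ENNReal.toReal_nonneg
  have hMT0 : 0 ≤ MT := ENNReal.toReal_nonneg
  -- difference functions and their properties
  have hdφ : IsWPsi Ω Γ₁ (fun x => φ x - φ' x) (fun x => gφ x - gφ' x) := isWPsi_sub hφ hφ'
  have hwH : IsH10 Ω (fun x => G₁ x - G₁' x) (fun x => gG₁ x - gG₁' x) := isH10_sub hG₁ hG₁'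
  have hgφ2 : MemLp gφ 2 (volume.restrict Ω) := hφ.1.2.1
  have hgφ2' : MemLp gφ' 2 (volume.restrict Ω) := hφ'.1.2.1
  have hgdφ2 : MemLp (fun x => gφ x - gφ' x) 2 (volume.restrict Ω) := hgφ2.sub hgφ2'
  have hdφ2 : MemLp (fun x => φ x - φ' x) 2 (volume.restrict Ω) := hφ.1.1.sub hφ'.1.1
  have hgw2 : MemLp (fun x => gG₁ x - gG₁' x) 2 (volume.restrict Ω) :=
    hG₁.1.2.1.sub hG₁'.1.2.1
  have hw2 : MemLp (fun x => G₁ x - G₁' x) 2 (volume.restrict Ω) := hG₁.1.1.sub hG₁'.1.1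
  have hdG2 : MemLp (fun x => gG x - gG' x) 2 (volume.restrict Ω) := hG.2.1.sub hG'.2.1
  ----------------------------------------------------------------
  -- STEP A : estimate A ≤ C * MK * DG
  ----------------------------------------------------------------
  have eA : (∫ x in Ω, dot (gφ x) (gφ x - gφ' x))
      + (∫ x in Ω, dot (K x) (gG x) * (φ x - φ' x))
      = ∫ x in Ω, f x * (φ x - φ' x) := hSG _ _ hdφ
  have eA' : (∫ x in Ω, dot (gφ' x) (gφ x - gφ' x))
      + (∫ x in Ω, dot (K x) (gG' x) * (φ x - φ' x))
      = ∫ x in Ω, f x * (φ x - φ' x) := hSG' _ _ hdφ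
  have hIa : Integrable (fun x => dot (gφ x) (gφ x - gφ' x)) (volume.restrict Ω) :=
    integrable_dot' hgφ2 hgdφ2
  have hIa' : Integrable (fun x => dot (gφ' x) (gφ x - gφ' x)) (volume.restrict Ω) :=
    integrable_dot' hgφ2' hgdφ2
  have splitgrad : (∫ x in Ω, dot (gφ x - gφ' x) (gφ x - gφ' x))
      = (∫ x in Ω, dot (gφ x) (gφ x - gφ' x)) - ∫ x in Ω, dot (gφ' x) (gφ x - gφ' x) := by
    rw [← integral_sub hIa hIa']
    refine integral_congr_ae (Filter.Eventually.of_forall fun x => ?_)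
    simp only [dot, PiLp.sub_apply]; ring
  have hIk : Integrable (fun x => dot (K x) (gG x) * (φ x - φ' x)) (volume.restrict Ω) :=
    integrable_dot_mul hK hG.2.1 hdφ2
  have hIk' : Integrable (fun x => dot (K x) (gG' x) * (φ x - φ' x)) (volume.restrict Ω) :=
    integrable_dot_mul hK hG'.2.1 hdφ2
  have splitK : (∫ x in Ω, dot (K x) (gG x - gG' x) * (φ x - φ' x))
      = (∫ x in Ω, dot (K x) (gG x) * (φ x - φ' x))
        - ∫ x in Ω, dot (K x) (gG' x) * (φ x - φ' x) := by
    rw [← integral_sub hIk hIk']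
    refine integral_congr_ae (Filter.Eventually.of_forall fun x => ?_)
    simp only [dot, PiLp.sub_apply]; ring
  have hself : (∫ x in Ω, dot (gφ x - gφ' x) (gφ x - gφ' x)) = A ^ 2 :=
    integral_dot_self_eq hgdφ2
  have hAsq : A ^ 2 = -(∫ x in Ω, dot (K x) (gG x - gG' x) * (φ x - φ' x)) := by
    linarith [eA, eA', splitgrad, splitK, hself]
  have hPφ : (eLpNorm (fun x => φ x - φ' x) 2 (volume.restrict Ω)).toReal ≤ C * A :=
    hPoincareΨ _ _ hdφ
  have hboundA : |∫ x in Ω, dot (K x) (gG x - gG' x) * (φ x - φ' x)|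
      ≤ MK * (DG * (C * A)) := by
    refine (abs_integral_dot_mul_le hK hdG2 hdφ2).trans ?_
    exact mul_le_mul_of_nonneg_left (mul_le_mul_of_nonneg_left hPφ hDG0) hMK0
  have hAineq : A ^ 2 ≤ MK * (DG * (C * A)) := by
    rw [hAsq]
    exact (neg_le_abs _).trans hboundA
  have hAle : A ≤ C * MK * DG := by
    rcases eq_or_lt_of_le hA0 with h | h
    · rw [← h]
      exact mul_nonneg (mul_nonneg hC.le hMK0) hDG0
    · have h2 : A * A ≤ (C * MK * DG) * A := by nlinarith [hAineq]
      exact le_of_mul_le_mul_right h2 h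
  ----------------------------------------------------------------
  -- STEP B : estimate lam * B ^ 2
  ----------------------------------------------------------------
  have eB : lam * (∫ x in Ω, dot (gG₁ x) (gG₁ x - gG₁' x))
      + (∫ x in Ω, dot (gΘ x) (perp (gφ x)) * (G₁ x - G₁' x))
      = ∫ x in Ω, g x * (G₁ x - G₁' x) := hQφ _ _ hwH
  have eB' : lam * (∫ x in Ω, dot (gG₁' x) (gG₁ x - gG₁' x))
      + (∫ x in Ω, dot (gΘ x) (perp (gφ' x)) * (G₁ x - G₁' x))
      = ∫ x in Ω, g x * (G₁ x - G₁' x) := hQφ' _ _ hwH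
  have hIb : Integrable (fun x => dot (gG₁ x) (gG₁ x - gG₁' x)) (volume.restrict Ω) :=
    integrable_dot' hG₁.1.2.1 hgw2
  have hIb' : Integrable (fun x => dot (gG₁' x) (gG₁ x - gG₁' x)) (volume.restrict Ω) :=
    integrable_dot' hG₁'.1.2.1 hgw2
  have splitgradB : (∫ x in Ω, dot (gG₁ x - gG₁' x) (gG₁ x - gG₁' x))
      = (∫ x in Ω, dot (gG₁ x) (gG₁ x - gG₁' x))
        - ∫ x in Ω, dot (gG₁' x) (gG₁ x - gG₁' x) := by
    rw [← integral_sub hIb hIb']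
    refine integral_congr_ae (Filter.Eventually.of_forall fun x => ?_)
    simp only [dot, PiLp.sub_apply]; ring
  have hIt : Integrable (fun x => dot (gΘ x) (perp (gφ x)) * (G₁ x - G₁' x))
      (volume.restrict Ω) := integrable_dot_mul hgΘb (memℒp_perp hgφ2) hw2
  have hIt' : Integrable (fun x => dot (gΘ x) (perp (gφ' x)) * (G₁ x - G₁' x))
      (volume.restrict Ω) := integrable_dot_mul hgΘb (memℒp_perp hgφ2') hw2
  have splitT : (∫ x in Ω, dot (gΘ x) (perp (gφ x - gφ' x)) * (G₁ x - G₁' x))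
      = (∫ x in Ω, dot (gΘ x) (perp (gφ x)) * (G₁ x - G₁' x))
        - ∫ x in Ω, dot (gΘ x) (perp (gφ' x)) * (G₁ x - G₁' x) := by
    rw [← integral_sub hIt hIt']
    refine integral_congr_ae (Filter.Eventually.of_forall fun x => ?_)
    simp only [dot, perp, PiLp.sub_apply, Matrix.cons_val_zero, Matrix.cons_val_one,
      Matrix.head_cons]
    ring
  have hselfB : (∫ x in Ω, dot (gG₁ x - gG₁' x) (gG₁ x - gG₁' x)) = B ^ 2 :=
    integral_dot_self_eq hgw2
  have hBsq : lam * B ^ 2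
      = -(∫ x in Ω, dot (gΘ x) (perp (gφ x - gφ' x)) * (G₁ x - G₁' x)) := by
    have hd : lam * B ^ 2 = lam * (∫ x in Ω, dot (gG₁ x) (gG₁ x - gG₁' x))
        - lam * (∫ x in Ω, dot (gG₁' x) (gG₁ x - gG₁' x)) := by
      rw [← hselfB, splitgradB]; ring
    linarith [eB, eB', splitT, hd]
  have hperpnorm : eLpNorm (fun x => perp (gφ x - gφ' x)) 2 (volume.restrict Ω)
      = eLpNorm (fun x => gφ x - gφ' x) 2 (volume.restrict Ω) :=
    eLpNorm_congr_norm_ae (Filter.Eventually.of_forall fun x => norm_perp _)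
  have hPw : (eLpNorm (fun x => G₁ x - G₁' x) 2 (volume.restrict Ω)).toReal ≤ C * B :=
    hPoincareH _ _ hwH
  have hboundB : |∫ x in Ω, dot (gΘ x) (perp (gφ x - gφ' x)) * (G₁ x - G₁' x)|
      ≤ MT * (A * (C * B)) := by
    have h1 := abs_integral_dot_mul_le hgΘb (memℒp_perp hgdφ2) hw2
    rw [hperpnorm] at h1
    refine h1.trans ?_
    exact mul_le_mul_of_nonneg_left (mul_le_mul_of_nonneg_left hPw hA0) hMT0
  have hBineq : lam * B ^ 2 ≤ MT * (A * (C * B)) := by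
    rw [hBsq]
    exact (neg_le_abs _).trans hboundB
  have hfinal : lam * B ^ 2 ≤ MT * ((C * MK * DG) * (C * B)) := by
    refine hBineq.trans ?_
    exact mul_le_mul_of_nonneg_left
      (mul_le_mul_of_nonneg_right hAle (mul_nonneg hC.le hB0)) hMT0
  ----------------------------------------------------------------
  -- conclusion
  ----------------------------------------------------------------
  rcases eq_or_lt_of_le hB0 with h | h
  · rw [← h]
    refine mul_nonneg (div_nonneg ?_ hlam.le) hDG0
    exact mul_nonneg (mul_nonneg (pow_nonneg hC.le 2) hMK0) hMT0
  · rw [div_mul_eq_mul_div, le_div_iff₀ hlam]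
    have h3 : lam * B * B ≤ (C ^ 2 * MK * MT * DG) * B := by
      calc lam * B * B = lam * B ^ 2 := by ring
        _ ≤ MT * ((C * MK * DG) * (C * B)) := hfinal
        _ = (C ^ 2 * MK * MT * DG) * B := by ring
    have h4 : lam * B ≤ C ^ 2 * MK * MT * DG := le_of_mul_le_mul_right h3 h
    linarith [h4]
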